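/- arXiv:1811.03595 — 2 statements merged into one kernel-verified Lean document; each statement's English description precedes it below -/
import Mathlib

section
/- For subsets A, B of a common well-order, the degree of the order type of A ∪ B equals the maximum of the degrees of the order types of A and B, where the degree of an ordinal is the exponent of the leading term of its Cantor normal form (and deg(0) is taken appropriately, assuming A and B are nonempty). -/
open Ordinal
noncomputable def deg (a : Ordinal) : Ordinal := Ordinal.log omega0 a
noncomputable def oType {ι : Type*} [LinearOrder ι] [WellFoundedLT ι] (S : Set ι) : Ordinal :=
  Ordinal.type (Subrel ((· < ·) : ι → ι → Prop) (· ∈ S))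
noncomputable def cnfSum (n : ℕ) (e : Fin n → Ordinal) (c : Fin n → ℕ) : Ordinal :=
  (List.ofFn fun i => omega0 ^ (e i) * (c i)).sum
noncomputable def omegaSum (o : ℕ → Ordinal) : Ordinal :=
  ⨆ n, (List.ofFn fun i : Fin n => o i).sum

/-!
The order type of `A ∪ B` is at most the Hessenberg natural sum `oType A ♯ oType B`, because
`x ↦ oType (A ∩ Iio x) ♯ oType (B ∩ Iio x)` is strictly monotone on `A ∪ B`. Every power `ω ^ γ`
is closed under `♯`: at a successor `γ = δ + 1`, `a ♯ b` is bounded by the natural sum taken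
separately on the quotients (finite) and the remainders (below `ω ^ δ`) modulo `ω ^ δ`. So with `d` the
larger degree, `oType A` and `oType B` lie below `ω ^ (d + 1)`, hence so does `oType (A ∪ B)`.
-/

namespace Ordinal

universe u

noncomputable def nadd (a b : Ordinal.{u}) : Ordinal.{u} :=
  max (⨆ x : Set.Iio a, Order.succ (nadd x.1 b)) (⨆ y : Set.Iio b, Order.succ (nadd a y.1))
termination_by (a, b)
decreasing_by
  · exact Prod.Lex.left _ _ x.2
  · exact Prod.Lex.right _ y.2

infixl:65 " ♯ " => nadd

variable {a b c d : Ordinal.{u}}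

theorem nadd_le_iff : a ♯ b ≤ c ↔ (∀ a' < a, a' ♯ b < c) ∧ ∀ b' < b, a ♯ b' < c := by
  rw [nadd, max_le_iff, Ordinal.iSup_le_iff, Ordinal.iSup_le_iff]
  simp only [Order.succ_le_iff, Subtype.forall, Set.mem_Iio]

theorem nadd_lt_nadd_right (h : a < b) (c : Ordinal) : a ♯ c < b ♯ c :=
  (nadd_le_iff.1 le_rfl).1 a h

theorem nadd_lt_nadd_left (h : b < c) (a : Ordinal) : a ♯ b < a ♯ c :=
  (nadd_le_iff.1 le_rfl).2 b h

theorem nadd_lt_nadd_of_lt_of_le (h₁ : a < b) (h₂ : c ≤ d) : a ♯ c < b ♯ d :=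
  (nadd_lt_nadd_right h₁ c).trans_le <|
    (StrictMono.monotone fun _ _ h ↦ nadd_lt_nadd_left h b) h₂

theorem nadd_lt_nadd_of_le_of_lt (h₁ : a ≤ b) (h₂ : c < d) : a ♯ c < b ♯ d :=
  ((StrictMono.monotone fun _ _ h ↦ nadd_lt_nadd_right h c) h₁).trans_lt <|
    nadd_lt_nadd_left h₂ b

theorem nadd_comm (a b : Ordinal) : a ♯ b = b ♯ a := by
  induction a using WellFoundedLT.induction generalizing b with | _ a IHa =>
  induction b using WellFoundedLT.induction with | _ b IHb =>
  refine le_antisymm (nadd_le_iff.2 ⟨fun a' h ↦ ?_, fun b' h ↦ ?_⟩)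
    (nadd_le_iff.2 ⟨fun b' h ↦ ?_, fun a' h ↦ ?_⟩)
  · rw [IHa a' h]; exact nadd_lt_nadd_left h b
  · rw [IHb b' h]; exact nadd_lt_nadd_right h a
  · rw [← IHb b' h]; exact nadd_lt_nadd_left h a
  · rw [← IHa a' h]; exact nadd_lt_nadd_right h b

theorem zero_nadd_zero : (0 : Ordinal) ♯ 0 = 0 :=
  nonpos_iff_eq_zero.1 <| nadd_le_iff.2 ⟨by simp, by simp⟩

theorem natCast_nadd_natCast_le (m n : ℕ) : (m : Ordinal) ♯ n ≤ (m + n : ℕ) := by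
  induction m using Nat.strong_induction_on generalizing n with | _ m IHm =>
  induction n using Nat.strong_induction_on with | _ n IHn =>
  refine nadd_le_iff.2 ⟨fun a' h ↦ ?_, fun b' h ↦ ?_⟩
  · obtain ⟨k, rfl⟩ := lt_omega0.1 (h.trans (natCast_lt_omega0 m))
    have hk : k < m := by exact_mod_cast h
    exact (IHm k hk n).trans_lt (by exact_mod_cast Nat.add_lt_add_right hk n)
  · obtain ⟨k, rfl⟩ := lt_omega0.1 (h.trans (natCast_lt_omega0 n))
    have hk : k < n := by exact_mod_cast h
    exact (IHn k hk).trans_lt (by exact_mod_cast Nat.add_lt_add_left hk m)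

theorem isPrincipal_nadd_omega0 : IsPrincipal (· ♯ ·) ω := by
  intro a b ha hb
  obtain ⟨m, rfl⟩ := lt_omega0.1 ha
  obtain ⟨n, rfl⟩ := lt_omega0.1 hb
  exact (natCast_nadd_natCast_le m n).trans_lt (natCast_lt_omega0 _)

noncomputable def naddDigitwise (W a b : Ordinal) : Ordinal :=
  W * (a / W ♯ b / W) + (a % W ♯ b % W)

theorem naddDigitwise_comm (W a b : Ordinal) : naddDigitwise W a b = naddDigitwise W b a := by
  rw [naddDigitwise, naddDigitwise, nadd_comm (a / W), nadd_comm (a % W)]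

variable {W : Ordinal.{u}}

theorem naddDigitwise_lt_mul_succ (hW₀ : W ≠ 0) (hW : IsPrincipal (· ♯ ·) W) (a b : Ordinal) :
    naddDigitwise W a b < W * Order.succ (a / W ♯ b / W) := by
  rw [mul_succ]
  exact add_lt_add_right (hW (mod_lt a hW₀) (mod_lt b hW₀)) _

theorem naddDigitwise_lt_naddDigitwise_left (hW₀ : W ≠ 0) (hW : IsPrincipal (· ♯ ·) W)
    {a' a : Ordinal} (h : a' < a) (b : Ordinal) : naddDigitwise W a' b < naddDigitwise W a b := by
  rcases (div_le_left h.le W).lt_or_eq with hq | hq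
  · calc naddDigitwise W a' b < W * Order.succ (a' / W ♯ b / W) :=
          naddDigitwise_lt_mul_succ hW₀ hW a' b
      _ ≤ W * (a / W ♯ b / W) :=
          mul_le_mul_right (Order.succ_le_of_lt (nadd_lt_nadd_right hq _)) W
      _ ≤ naddDigitwise W a b := le_self_add
  · have hr : a' % W < a % W := by
      rw [← div_add_mod a' W, ← div_add_mod a W, hq] at h
      exact (add_lt_add_iff_left _).1 h
    rw [naddDigitwise, naddDigitwise, hq]
    exact add_lt_add_right (nadd_lt_nadd_right hr _) _

theorem nadd_le_naddDigitwise (hW₀ : W ≠ 0) (hW : IsPrincipal (· ♯ ·) W) (a b : Ordinal) :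
    a ♯ b ≤ naddDigitwise W a b := by
  induction a using WellFoundedLT.induction generalizing b with | _ a IHa =>
  induction b using WellFoundedLT.induction with | _ b IHb =>
  refine nadd_le_iff.2 ⟨fun a' h ↦ ?_, fun b' h ↦ ?_⟩
  · exact (IHa a' h b).trans_lt (naddDigitwise_lt_naddDigitwise_left hW₀ hW h b)
  · rw [naddDigitwise_comm W a b]
    exact (IHb b' h).trans_lt <| (naddDigitwise_comm W a b').trans_lt <|
      naddDigitwise_lt_naddDigitwise_left hW₀ hW h a

theorem IsPrincipal.nadd_mul_omega0 (hW₀ : W ≠ 0) (hW : IsPrincipal (· ♯ ·) W) :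
    IsPrincipal (· ♯ ·) (W * ω) := by
  intro a b ha hb
  have hq := isPrincipal_nadd_omega0 ((lt_mul_iff_div_lt hW₀).1 ha) ((lt_mul_iff_div_lt hW₀).1 hb)
  calc a ♯ b ≤ naddDigitwise W a b := nadd_le_naddDigitwise hW₀ hW a b
    _ < W * Order.succ (a / W ♯ b / W) := naddDigitwise_lt_mul_succ hW₀ hW a b
    _ < W * ω := mul_lt_mul_of_pos_left (isSuccLimit_omega0.succ_lt hq) hW₀.bot_lt

theorem isPrincipal_nadd_omega0_opow (γ : Ordinal) : IsPrincipal (· ♯ ·) (ω ^ γ) := by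
  induction γ using limitRecOn with
  | zero => simpa using zero_nadd_zero
  | add_one δ IH =>
    rw [opow_add_one]
    exact IH.nadd_mul_omega0 (opow_ne_zero δ omega0_ne_zero)
  | limit γ hγ IH =>
    intro a b ha hb
    obtain ⟨δ₁, hδ₁, ha⟩ := (lt_opow_of_isSuccLimit omega0_ne_zero hγ).1 ha
    obtain ⟨δ₂, hδ₂, hb⟩ := (lt_opow_of_isSuccLimit omega0_ne_zero hγ).1 hb
    have hδ := max_lt hδ₁ hδ₂
    exact (IH _ hδ (ha.trans_le (opow_le_opow_right omega0_pos (le_max_left δ₁ δ₂)))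
      (hb.trans_le (opow_le_opow_right omega0_pos (le_max_right δ₁ δ₂)))).trans
      ((opow_lt_opow_iff_right one_lt_omega0).2 hδ)

theorem type_le_of_strictMono {α : Type u} [LinearOrder α] [WellFoundedLT α] {f : α → Ordinal.{u}}
    (hf : StrictMono f) {c : Ordinal.{u}} (hc : ∀ x, f x < c) : typeLT α ≤ c := by
  rw [← type_toType c, type_le_iff']
  exact ⟨(OrderEmbedding.ofStrictMono (fun x ↦ ToType.mk ⟨f x, hc x⟩)
    fun _ _ h ↦ ToType.mk.strictMono (hf h)).ltEmbedding⟩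

end Ordinal

section oType

variable {ι : Type*} [LinearOrder ι] [WellFoundedLT ι]

theorem oType_mono {S T : Set ι} (h : S ⊆ T) : oType S ≤ oType T :=
  type_le_iff'.2 ⟨(OrderEmbedding.ofStrictMono (Set.inclusion h) fun _ _ h ↦ h).ltEmbedding⟩

theorem oType_inter_Iio_lt {T : Set ι} {x : ι} (hx : x ∈ T) : oType (T ∩ Set.Iio x) < oType T := by
  refine lt_of_eq_of_lt ?_ (typein_lt_type (Subrel (· < ·) (· ∈ T)) ⟨x, hx⟩)
  rw [← type_subrel]
  exact RelIso.ordinalType_congr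
    { toFun y := ⟨⟨y, y.2.1⟩, y.2.2⟩
      invFun y := ⟨y.1, y.1.2, y.2⟩
      map_rel_iff' := Iff.rfl }

theorem oType_lt_of_subset_inter_Iio {S T : Set ι} {x : ι} (hS : S ⊆ T ∩ Set.Iio x) (hx : x ∈ T) :
    oType S < oType T :=
  (oType_mono hS).trans_lt (oType_inter_Iio_lt hx)

theorem oType_union_le_nadd (A B : Set ι) : oType (A ∪ B) ≤ oType A ♯ oType B := by
  refine type_le_of_strictMono (f := fun x : ↥(A ∪ B) ↦
    oType (A ∩ Set.Iio x.1) ♯ oType (B ∩ Set.Iio x.1)) ?_ fun x ↦ ?_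
  · intro x y (hxy : x.1 < y.1)
    have hmono (S : Set ι) : oType (S ∩ Set.Iio x.1) ≤ oType (S ∩ Set.Iio y.1) :=
      oType_mono fun z hz ↦ ⟨hz.1, hz.2.trans hxy⟩
    have hlt {S : Set ι} (hx : x.1 ∈ S) : oType (S ∩ Set.Iio x.1) < oType (S ∩ Set.Iio y.1) :=
      oType_lt_of_subset_inter_Iio (fun z hz ↦ ⟨⟨hz.1, hz.2.trans hxy⟩, hz.2⟩) ⟨hx, hxy⟩
    rcases x.2 with hx | hx
    · exact nadd_lt_nadd_of_lt_of_le (hlt hx) (hmono B)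
    · exact nadd_lt_nadd_of_le_of_lt (hmono A) (hlt hx)
  · rcases x.2 with hx | hx
    · exact nadd_lt_nadd_of_lt_of_le (oType_inter_Iio_lt hx) (oType_mono Set.inter_subset_left)
    · exact nadd_lt_nadd_of_le_of_lt (oType_mono Set.inter_subset_left) (oType_inter_Iio_lt hx)

end oType

theorem deg_union_general {ι : Type*} [LinearOrder ι] [WellFoundedLT ι]
    (A B : Set ι) :
    deg (oType (A ∪ B)) = max (deg (oType A)) (deg (oType B)) := by
  refine le_antisymm ?_ (max_le (log_mono_right _ (oType_mono Set.subset_union_left))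
    (log_mono_right _ (oType_mono Set.subset_union_right)))
  set d := max (deg (oType A)) (deg (oType B))
  have hlt {x : Ordinal} (hx : deg x ≤ d) : x < ω ^ Order.succ d :=
    (lt_opow_succ_log_self one_lt_omega0 x).trans_le
      (opow_le_opow_right omega0_pos (Order.succ_le_succ hx))
  have hU : oType (A ∪ B) < ω ^ Order.succ d := (oType_union_le_nadd A B).trans_lt <|
    isPrincipal_nadd_omega0_opow _ (hlt (le_max_left _ _)) (hlt (le_max_right _ _))
  exact Order.lt_succ_iff.1 ((lt_opow_iff_log_lt' one_lt_omega0 (by simp)).1 hU)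

theorem deg_union {ι : Type*} [LinearOrder ι] [WellFoundedLT ι]
    (A B : Set ι) (hA : A.Nonempty) (hB : B.Nonempty) :
    deg (oType (A ∪ B)) = max (deg (oType A)) (deg (oType B)) :=
  deg_union_general A B
end

section
/- Let u be a nonempty finite word over a totally ordered alphabet and let L be a language such that every word w ∈ L satisfies w <_s u^ω (strictly below the ω-power of u in the strict order), and such that for every N ≥ 0 there is a word w ∈ L with u^N <_ℓ w. Then the supremum of L in (Σ^{≤ω}, <_ℓ) is exactly u^ω, and L has no greatest element. -/
open Stream'

variable {α : Type*}

/-- Strict (non-prefix) lexicographic order on finite and ω-words. -/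
def sLt [LT α] (u v : Seq α) : Prop :=
  ∃ n a b, (∀ i < n, u.get? i = v.get? i) ∧ u.get? n = some a ∧ v.get? n = some b ∧ a < b

/-- Proper prefix order on finite and ω-words. -/
def pLt (u v : Seq α) : Prop :=
  u ≠ v ∧ ∀ i a, u.get? i = some a → v.get? i = some a

/-- The lexicographic order `<_ℓ` is the union of `<_s` and `<_p`. -/
def lexLt [LT α] (u v : Seq α) : Prop := sLt u v ∨ pLt u v

def lexLe [LT α] (u v : Seq α) : Prop := lexLt u v ∨ u = v

/-- `s` is the supremum of `S` in `(Σ^{≤ω}, <_ℓ)`. -/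
def IsSupW [LT α] (S : Set (Seq α)) (s : Seq α) : Prop :=
  (∀ w ∈ S, lexLe w s) ∧ ∀ t, (∀ w ∈ S, lexLe w t) → lexLe s t

/-- A language is prefix-free: no word is a proper prefix of another. -/
def PrefixFree (L : Set (List α)) : Prop := ∀ u ∈ L, ∀ v ∈ L, u <+: v → u = v

/-- The ω-power `u^ω` of a nonempty finite word `u`. -/
def omegaPow (u : List α) (hu : u ≠ []) : Seq α := Seq.ofStream (Stream'.cycle u hu)

/-!
The ω-power `u^ω` is a limit, in the prefix topology, of words of `L`: since `u^N` is a prefix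
of `u^ω`, `u^N <_s w` would give `u^ω <_s w`, contradicting `w <_s u^ω`; so `u^N <_ℓ w` forces
`u^N` to be a prefix of `w`, and `w` agrees with `u^ω` on its first `N` letters. On the other
hand `t <_ℓ v` is witnessed by a finite prefix of `v`, so it persists when `v` is replaced by any
word sharing that prefix. Hence every `t <_ℓ u^ω` lies below some word of `L`: such a `t` is not
an upper bound of `L`, and `L` has no greatest element.
-/

def pLe (u v : Seq α) : Prop :=
  ∀ i a, u.get? i = some a → v.get? i = some a

lemma pLe.antisymm {s t : Seq α} (hst : pLe s t) (hts : pLe t s) : s = t := by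
  refine Seq.ext fun i => ?_
  cases hs : s.get? i with
  | some a => exact (hst i a hs).symm
  | none =>
    cases ht : t.get? i with
    | none => rfl
    | some b => simpa [hs] using hts i b ht

lemma pLe_of_agree_of_get?_eq_none {s t : Seq α} {n : ℕ}
    (hagree : ∀ i < n, s.get? i = t.get? i) (hn : s.get? n = none) : pLe s t := by
  intro i a ha
  have hi : i < n := by
    by_contra! hle
    simp [s.le_stable hle hn] at ha
  rwa [← hagree i hi]

lemma sLt_of_pLe_of_sLt [LT α] {s s' t : Seq α} (hss' : pLe s s') (hst : sLt s t) :
    sLt s' t := by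
  obtain ⟨n, a, b, hagree, ha, hb, hab⟩ := hst
  refine ⟨n, a, b, fun i hi => ?_, hss' n a ha, hb, hab⟩
  obtain ⟨c, hc⟩ := s.ge_stable hi.le ha
  rw [← hagree i hi, hc, hss' i c hc]

section Preorder

variable [Preorder α] {s t : Seq α}

lemma sLt_irrefl (s : Seq α) : ¬ sLt s s := by
  rintro ⟨n, a, b, -, ha, hb, hab⟩
  cases ha.symm.trans hb
  exact lt_irrefl a hab

lemma sLt.asymm (hst : sLt s t) : ¬ sLt t s := by
  rintro ⟨q, c, d, hagree', hc, hd, hcd⟩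
  obtain ⟨p, a, b, hagree, ha, hb, hab⟩ := hst
  rcases lt_trichotomy p q with hpq | rfl | hqp
  · have hba := hagree' p hpq
    rw [hb, ha, Option.some.injEq] at hba
    exact lt_irrefl a (hba ▸ hab)
  · obtain rfl := Option.some.inj (hc.symm.trans hb)
    obtain rfl := Option.some.inj (hd.symm.trans ha)
    exact lt_asymm hab hcd
  · have hdc := hagree q hqp
    rw [hd, hc, Option.some.injEq] at hdc
    exact lt_irrefl c (hdc ▸ hcd)

lemma sLt.not_pLe (hst : sLt s t) : ¬ pLe s t := by
  intro hpre
  obtain ⟨n, a, b, -, ha, hb, hab⟩ := hst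
  cases (hpre n a ha).symm.trans hb
  exact lt_irrefl a hab

lemma sLt.not_pLe' (hst : sLt s t) : ¬ pLe t s := by
  intro hpre
  obtain ⟨n, a, b, -, ha, hb, hab⟩ := hst
  cases (hpre n b hb).symm.trans ha
  exact lt_irrefl a hab

lemma lexLt.not_lexLe (hst : lexLt s t) : ¬ lexLe t s := by
  rcases hst with hst | ⟨hne, hst⟩ <;> rintro ((hts | ⟨-, hts⟩) | rfl)
  · exact hst.asymm hts
  · exact hst.not_pLe' hts
  · exact sLt_irrefl _ hst
  · exact hts.not_pLe' hst
  · exact hne (pLe.antisymm hst hts)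
  · exact hne rfl

end Preorder

lemma lexLe_or_lexLt [LinearOrder α] (s t : Seq α) : lexLe s t ∨ lexLt t s := by
  by_cases hst : s = t
  · exact Or.inl (Or.inr hst)
  have hdiff : ∃ n, s.get? n ≠ t.get? n := by
    by_contra! h
    exact hst (Seq.ext h)
  classical
  obtain ⟨hne, hagree⟩ : s.get? (Nat.find hdiff) ≠ t.get? (Nat.find hdiff) ∧
      ∀ i < Nat.find hdiff, s.get? i = t.get? i :=
    ⟨Nat.find_spec hdiff, fun i hi => not_not.mp (Nat.find_min hdiff hi)⟩
  cases hs : s.get? (Nat.find hdiff) with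
  | none =>
    exact Or.inl (Or.inl (Or.inr ⟨hst, pLe_of_agree_of_get?_eq_none hagree hs⟩))
  | some a =>
    cases ht : t.get? (Nat.find hdiff) with
    | none =>
      exact Or.inr (Or.inr ⟨Ne.symm hst,
        pLe_of_agree_of_get?_eq_none (fun i hi => (hagree i hi).symm) ht⟩)
    | some b =>
      rcases lt_trichotomy a b with hab | rfl | hba
      · exact Or.inl (Or.inl (Or.inl ⟨_, a, b, hagree, hs, ht, hab⟩))
      · exact absurd (hs.trans ht.symm) hne
      · exact Or.inr (Or.inl ⟨_, b, a, fun i hi => (hagree i hi).symm, ht, hs, hba⟩)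

lemma lexLt.exists_forall_agree_lexLt [LT α] {t W : Seq α} (htW : lexLt t W) :
    ∃ n, ∀ w : Seq α, (∀ i < n, w.get? i = W.get? i) → lexLt t w := by
  rcases htW with ⟨k, c, b, hagree, hc, hb, hcb⟩ | ⟨hne, hpre⟩
  · refine ⟨k + 1, fun w hw => Or.inl ⟨k, c, b, fun i hi => ?_, hc, ?_, hcb⟩⟩
    · rw [hagree i hi, hw i (by omega)]
    · rw [hw k (by omega), hb]
  · obtain ⟨k, hk⟩ : ∃ k, t.get? k ≠ W.get? k := by
      by_contra! h
      exact hne (Seq.ext h)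
    have htk : t.get? k = none := by
      cases ht : t.get? k with
      | none => rfl
      | some a => exact (hk (ht.trans (hpre k a ht).symm)).elim
    obtain ⟨b, hb⟩ : ∃ b, W.get? k = some b :=
      Option.ne_none_iff_exists'.mp fun hW => hk (htk.trans hW.symm)
    refine ⟨k + 1, fun w hw => Or.inr ⟨fun htw => ?_, fun i a ha => ?_⟩⟩
    · have hwk := hw k (by omega)
      rw [← htw, htk, hb] at hwk
      cases hwk
    · have hi : i < k := by
        by_contra! hle
        simp [t.le_stable hle htk] at ha
      rw [hw i (by omega), hpre i a ha]

section Approx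

variable {S : Set (Seq α)} {W : Seq α}

lemma exists_mem_lexLt_of_approx [LT α] (happrox : ∀ n, ∃ w ∈ S, ∀ i < n, w.get? i = W.get? i)
    {t : Seq α} (htW : lexLt t W) : ∃ w ∈ S, lexLt t w := by
  obtain ⟨n, hn⟩ := htW.exists_forall_agree_lexLt
  obtain ⟨w, hwS, hw⟩ := happrox n
  exact ⟨w, hwS, hn w hw⟩

theorem isSupW_of_approx [LinearOrder α] (hlt : ∀ w ∈ S, lexLt w W)
    (happrox : ∀ n, ∃ w ∈ S, ∀ i < n, w.get? i = W.get? i) : IsSupW S W := by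
  refine ⟨fun w hw => Or.inl (hlt w hw), fun t ht => ?_⟩
  refine (lexLe_or_lexLt W t).resolve_right fun htW => ?_
  obtain ⟨w, hwS, htw⟩ := exists_mem_lexLt_of_approx happrox htW
  exact htw.not_lexLe (ht w hwS)

theorem not_exists_max_of_approx [Preorder α] (hlt : ∀ w ∈ S, lexLt w W)
    (happrox : ∀ n, ∃ w ∈ S, ∀ i < n, w.get? i = W.get? i) :
    ¬ ∃ m ∈ S, ∀ w ∈ S, lexLe w m := by
  rintro ⟨m, hmS, hmax⟩
  obtain ⟨w, hwS, hmw⟩ := exists_mem_lexLt_of_approx happrox (hlt m hmS)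
  exact hmw.not_lexLe (hmax w hwS)

end Approx

section OmegaPow

variable (u : List α) (hu : u ≠ [])

lemma cycle_eq_flatten_replicate_append (N : ℕ) :
    cycle u hu = (List.replicate N u).flatten ++ₛ cycle u hu := by
  induction N with
  | zero => rfl
  | succ N ih =>
    rw [List.replicate_succ, List.flatten_cons, append_append_stream, ← ih, ← cycle_eq]

lemma pLe_flatten_replicate_omegaPow (N : ℕ) :
    pLe (Seq.ofList (List.replicate N u).flatten) (omegaPow u hu) := by
  intro i a ha
  obtain ⟨hi, rfl⟩ := List.getElem?_eq_some_iff.mp ((Seq.ofList_get? _ _).symm.trans ha)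
  change some ((cycle u hu).get i) = _
  rw [cycle_eq_flatten_replicate_append u hu N, get_append_left _ _ _ hi]

variable {u}

lemma agree_omegaPow_of_pLe {N : ℕ} {s : Seq α}
    (hs : pLe (Seq.ofList (List.replicate N u).flatten) s) :
    ∀ i < N, s.get? i = (omegaPow u hu).get? i := by
  intro i hi
  have hlen : i < ((List.replicate N u).flatten).length := by
    simpa using hi.trans_le (Nat.le_mul_of_pos_right N (List.length_pos_iff.mpr hu))
  obtain ⟨a, ha⟩ : ∃ a, (Seq.ofList (List.replicate N u).flatten).get? i = some a :=
    ⟨_, (Seq.ofList_get? _ _).trans (List.getElem?_eq_getElem hlen)⟩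
  rw [hs i a ha, pLe_flatten_replicate_omegaPow u hu N i a ha]

end OmegaPow

theorem sup_eq_omegaPow [LinearOrder α] (u : List α) (hu : u ≠ []) (L : Set (List α))
    (h1 : ∀ w ∈ L, sLt (Seq.ofList w) (omegaPow u hu))
    (h2 : ∀ N : ℕ, ∃ w ∈ L, lexLt (Seq.ofList (List.replicate N u).flatten) (Seq.ofList w)) :
    IsSupW (Seq.ofList '' L) (omegaPow u hu) ∧
      ¬ ∃ m ∈ L, ∀ w ∈ L, lexLe (Seq.ofList w) (Seq.ofList m) := by
  have hlt : ∀ w ∈ Seq.ofList '' L, lexLt w (omegaPow u hu) := by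
    rintro _ ⟨w, hwL, rfl⟩
    exact Or.inl (h1 w hwL)
  have happrox : ∀ n, ∃ w ∈ Seq.ofList '' L, ∀ i < n, w.get? i = (omegaPow u hu).get? i := by
    intro n
    obtain ⟨w, hwL, hs | hp⟩ := h2 n
    · exact ((sLt_of_pLe_of_sLt (pLe_flatten_replicate_omegaPow u hu n) hs).asymm
        (h1 w hwL)).elim
    · exact ⟨_, Set.mem_image_of_mem _ hwL, agree_omegaPow_of_pLe hu hp.2⟩
  refine ⟨isSupW_of_approx hlt happrox, fun ⟨m, hmL, hmax⟩ => ?_⟩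
  refine not_exists_max_of_approx hlt happrox ⟨_, Set.mem_image_of_mem _ hmL, ?_⟩
  rintro _ ⟨w, hwL, rfl⟩
  exact hmax w hwL
end
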